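/- arXiv:1701.04916 — 3 statements merged into one kernel-verified Lean document; each statement's English description precedes it below -/
import Mathlib

section
/- The linear substitution ∂_x(s,T) is well defined: its value does not depend on the chosen enumeration of the occurrences of x in s. That is, if deg_x(s) = n and ŝ, ŝ' are two renamings of s obtained by assigning the fresh variables x₁,…,xₙ to the n occurrences of x in two different orders, then Σ_{f ∈ Sym(n)} ŝ[t_{f(1)}/x₁,…,t_{f(n)}/xₙ] = Σ_{f ∈ Sym(n)} ŝ'[t_{f(1)}/x₁,…,t_{f(n)}/xₙ] for every multiset t₁⋯tₙ of simple terms. -/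
set_option maxHeartbeats 1000000

noncomputable section
open scoped Classical

/-- Simple terms of the resource λ-calculus.  The argument of an application is a
finite multiset of simple terms (a simple poly-term), represented as a `List`
(read up to permutation).  The syntax is enriched with the constant `c0`. -/
inductive RTerm : Type
  | var : ℕ → RTerm
  | lam : ℕ → RTerm → RTerm
  | app : RTerm → List RTerm → RTerm
  | c0  : RTerm

/-- `deg x s` is the number of (free) occurrences of the variable `x` in `s`. -/
def RTerm.deg (x : ℕ) : RTerm → ℕ
  | .var y => if y = x then 1 else 0
  | .lam y t => if y = x then 0 else t.deg x
  | .app t T => t.deg x + (T.attach.map (fun u => u.1.deg x)).sum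
  | .c0 => 0
decreasing_by all_goals (try simp_wf) <;> first
  | (have := List.sizeOf_lt_of_mem u.2; omega)
  | omega

/-- Simultaneous substitution of (optional) terms for variables. -/
def RTerm.msubst (σ : ℕ → Option RTerm) : RTerm → RTerm
  | .var y => (σ y).getD (.var y)
  | .lam y t => .lam y (t.msubst (fun z => if z = y then none else σ z))
  | .app t T => .app (t.msubst σ) (T.attach.map (fun u => u.1.msubst σ))
  | .c0 => .c0
decreasing_by all_goals (try simp_wf) <;> first
  | (have := List.sizeOf_lt_of_mem u.2; omega)
  | omega

/-- `subst x u t` is `t[u/x]`. -/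
def RTerm.subst (x : ℕ) (u : RTerm) (t : RTerm) : RTerm :=
  t.msubst (fun y => if y = x then some u else none)

/-- Size of a simple term. -/
def RTerm.size : RTerm → ℕ
  | .var _ => 1
  | .lam _ t => t.size + 1
  | .app t T => t.size + (T.attach.map (fun u => u.1.size)).sum + 1
  | .c0 => 1
decreasing_by all_goals (try simp_wf) <;> first
  | (have := List.sizeOf_lt_of_mem u.2; omega)
  | omega

end
noncomputable section
open scoped Classical

/-- Simultaneous substitution of the terms `us i` for the variables `xs i`. -/
def msubstFin {n : ℕ} (xs : Fin n → ℕ) (us : Fin n → RTerm) (t : RTerm) : RTerm :=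
  t.msubst fun y => if h : ∃ i, xs i = y then some (us h.choose) else none

end

/-!
Collapsing the fresh variables of a linear renaming back to `x` loses nothing but their names.
By induction on `ŝ`: two linear renamings `ŝ`, `ŝ'` with the same capture-free collapse have the
same shape, and matching their occurrences of fresh variables yields a bijection `π` of the fresh
variables with `ŝ'[u ∘ π] = ŝ[u]` for every substitution `u`. The permutation of `Fin n` induced
by `π` then reindexes the sum over `Sym(n)`.
-/

theorem Set.BijOn.piecewise_union {α β : Type*} {s₁ s₂ : Set α} {t₁ t₂ : Set β} {f g : α → β}
    [∀ a, Decidable (a ∈ s₁)] (hf : Set.BijOn f s₁ t₁) (hg : Set.BijOn g s₂ t₂)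
    (hs : Disjoint s₁ s₂) (ht : Disjoint t₁ t₂) :
    Set.BijOn (s₁.piecewise f g) (s₁ ∪ s₂) (t₁ ∪ t₂) := by
  have hf' := hf.congr (s₁.piecewise_eqOn f g).symm
  have hg' := hg.congr ((s₁.piecewise_eqOn_compl f g).symm.mono hs.subset_compl_left)
  exact hf'.union hg' <| (Set.injOn_union hs).2
    ⟨hf'.injOn, hg'.injOn, fun a ha b hb => ht.ne_of_mem (hf'.mapsTo ha) (hg'.mapsTo hb)⟩

theorem Function.Injective.exists_perm_of_bijOn_range {ι α : Type*} {xs : ι → α}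
    (hinj : Function.Injective xs) {π : α → α} (hπ : Set.BijOn π (Set.range xs) (Set.range xs)) :
    ∃ σ : Equiv.Perm ι, ∀ i, xs (σ i) = π (xs i) := by
  let e := Equiv.ofInjective xs hinj
  exact ⟨e.trans ((hπ.equiv π).trans e.symm), fun i => Equiv.apply_ofInjective_symm hinj _⟩

namespace RTerm

@[simp] theorem deg_var (x y : ℕ) : (var y).deg x = if y = x then 1 else 0 := by rw [deg]
@[simp] theorem deg_lam (x y : ℕ) (t : RTerm) :
    (lam y t).deg x = if y = x then 0 else t.deg x := by rw [deg]
@[simp] theorem deg_app (x : ℕ) (t : RTerm) (T : List RTerm) :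
    (app t T).deg x = t.deg x + (T.map (deg x)).sum := by
  rw [deg, List.attach_map_val]
@[simp] theorem deg_c0 (x : ℕ) : c0.deg x = 0 := by rw [deg]

theorem deg_app_cons (t u : RTerm) (T : List RTerm) (x : ℕ) :
    (app t (u :: T)).deg x = (app t T).deg x + u.deg x := by
  simp only [deg_app, List.map_cons, List.sum_cons]
  omega

theorem msubst_var (σ : ℕ → Option RTerm) (y : ℕ) :
    (var y).msubst σ = (σ y).getD (var y) := by rw [msubst]
theorem msubst_lam (σ : ℕ → Option RTerm) (y : ℕ) (t : RTerm) :
    (lam y t).msubst σ = lam y (t.msubst fun z => if z = y then none else σ z) := by rw [msubst]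
@[simp] theorem msubst_app (σ : ℕ → Option RTerm) (t : RTerm) (T : List RTerm) :
    (app t T).msubst σ = app (t.msubst σ) (T.map (msubst σ)) := by
  rw [msubst, List.attach_map_val]
@[simp] theorem msubst_c0 (σ : ℕ → Option RTerm) : c0.msubst σ = c0 := by rw [msubst]

theorem msubst_congr {σ σ' : ℕ → Option RTerm} (t : RTerm)
    (h : ∀ y, t.deg y ≠ 0 → σ y = σ' y) : t.msubst σ = t.msubst σ' := by
  induction t using RTerm.rec (motive_2 := fun T => ∀ {σ σ' : ℕ → Option RTerm},
      (∀ y, (T.map (deg y)).sum ≠ 0 → σ y = σ' y) → T.map (msubst σ) = T.map (msubst σ'))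
    generalizing σ σ' with
  | var y => simp [msubst_var, h y]
  | lam y t ih =>
    simp only [msubst_lam, lam.injEq, true_and]
    refine ih fun z hz => ?_
    split_ifs with hzy
    · rfl
    · exact h z (by simpa [Ne.symm hzy] using hz)
  | app t T iht ihT =>
    simp only [deg_app] at h
    simp only [msubst_app, app.injEq]
    exact ⟨iht fun y hy => h y (by omega), ihT fun y hy => h y (by omega)⟩
  | c0 => simp
  | nil => rfl
  | cons u T ihu ihT =>
    rename_i σ σ' h
    simp only [List.map_cons, List.sum_cons, List.cons.injEq] at h ⊢
    exact ⟨ihu fun y hy => h y (by omega), ihT fun y hy => h y (by omega)⟩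

theorem msubst_none (t : RTerm) : t.msubst (fun _ => none) = t := by
  induction t using RTerm.rec (motive_2 := fun T => T.map (msubst fun _ => none) = T) with
  | var y => simp [msubst_var]
  | lam y t ih => simpa [msubst_lam] using ih
  | app t T iht ihT => simp [iht, ihT]
  | c0 => simp
  | nil => rfl
  | cons u T ihu ihT => simp [ihu, ihT]

theorem msubst_eq_self {σ : ℕ → Option RTerm} (t : RTerm) (h : ∀ y, t.deg y ≠ 0 → σ y = none) :
    t.msubst σ = t :=
  (msubst_congr t h).trans (msubst_none t)

def substOn (A : Finset ℕ) (us : ℕ → RTerm) : ℕ → Option RTerm :=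
  fun y => if y ∈ A then some (us y) else none

/-- `p.msubst (collapse A x)` is the paper's `p[x/x₁,…,xₙ]` for `A = {x₁,…,xₙ}`. -/
def collapse (A : Finset ℕ) (x : ℕ) : ℕ → Option RTerm :=
  substOn A fun _ => var x

theorem substOn_congr {A : Finset ℕ} {us us' : ℕ → RTerm} (h : ∀ a ∈ A, us a = us' a) :
    substOn A us = substOn A us' := by
  funext y
  by_cases hy : y ∈ A <;> simp [substOn, hy, h]

@[simp] theorem msubst_var_substOn (A : Finset ℕ) (us : ℕ → RTerm) (y : ℕ) :
    (var y).msubst (substOn A us) = if y ∈ A then us y else var y := by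
  by_cases hy : y ∈ A <;> simp [msubst_var, substOn, hy]

@[simp] theorem msubst_lam_substOn (A : Finset ℕ) (us : ℕ → RTerm) (y : ℕ) (t : RTerm) :
    (lam y t).msubst (substOn A us) = lam y (t.msubst (substOn (A.erase y) us)) := by
  rw [msubst_lam]
  congr 2
  funext z
  by_cases hz : z = y <;> simp [substOn, hz]

theorem msubst_substOn_eq_self {A : Finset ℕ} (us : ℕ → RTerm) {t : RTerm}
    (h : ∀ a ∈ A, t.deg a = 0) : t.msubst (substOn A us) = t :=
  msubst_eq_self t fun y hy => if_neg fun hyA => hy (h y hyA)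

theorem sum_deg_lam (A : Finset ℕ) (y : ℕ) (t : RTerm) :
    ∑ a ∈ A, (lam y t).deg a = ∑ a ∈ A.erase y, t.deg a := by
  simp only [deg_lam, ← Finset.filter_ne, Finset.sum_filter, ite_not]

theorem deg_msubst_collapse_le (x : ℕ) (A : Finset ℕ) (p : RTerm) :
    (p.msubst (collapse A x)).deg x ≤ p.deg x + ∑ a ∈ A, p.deg a := by
  induction p using RTerm.rec (motive_2 := fun T => ∀ A : Finset ℕ,
      ((T.map (msubst (collapse A x))).map (deg x)).sum
        ≤ (T.map (deg x)).sum + ∑ a ∈ A, (T.map (deg a)).sum)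
    generalizing A with
  | var y =>
    by_cases hy : y ∈ A
    · simp [collapse, hy, Finset.sum_ite_eq]
    · simp [collapse, hy]
  | lam y t ih =>
    rw [collapse, msubst_lam_substOn, sum_deg_lam]
    by_cases hyx : y = x
    · simp [hyx]
    · simpa [hyx, collapse] using ih (A.erase y)
  | app t T iht ihT =>
    have hT := ihT A
    simp only [List.map_map] at hT
    simp only [msubst_app, deg_app, List.map_map, Finset.sum_add_distrib]
    have := iht A
    omega
  | c0 => simp
  | nil => simp
  | cons u T ihu ihT =>
    rename_i A
    simp only [List.map_cons, List.sum_cons, Finset.sum_add_distrib]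
    have := ihu A
    have := ihT A
    omega

def occurringVars (A : Finset ℕ) (p : RTerm) : Set ℕ := {a | a ∈ A ∧ p.deg a ≠ 0}

theorem occurringVars_var {B : Finset ℕ} {z : ℕ} (hz : z ∈ B) : (var z).occurringVars B = {z} := by
  ext b
  by_cases hb : z = b
  · subst hb
    simp [occurringVars, hz]
  · simp [occurringVars, hb, Ne.symm hb]

theorem occurringVars_lam (A : Finset ℕ) (y : ℕ) (t : RTerm) :
    (lam y t).occurringVars A = t.occurringVars (A.erase y) := by
  ext a
  by_cases h : y = a
  · simp [occurringVars, h]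
  · simp [occurringVars, h, Ne.symm h]

theorem occurringVars_eq_union {A : Finset ℕ} {p p₁ p₂ : RTerm}
    (h : ∀ a, p.deg a = p₁.deg a + p₂.deg a) :
    p.occurringVars A = p₁.occurringVars A ∪ p₂.occurringVars A := by
  ext a
  simp only [occurringVars, Set.mem_union, Set.mem_ofPred_eq, h, ← and_or_left]
  exact and_congr_right fun _ => by omega

theorem disjoint_occurringVars {A : Finset ℕ} {p p₁ p₂ : RTerm}
    (h : ∀ a, p.deg a = p₁.deg a + p₂.deg a) (hle : ∀ a ∈ A, p.deg a ≤ 1) :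
    Disjoint (p₁.occurringVars A) (p₂.occurringVars A) := by
  rw [Set.disjoint_left]
  rintro a ⟨ha, h₁⟩ ⟨-, h₂⟩
  have := hle a ha
  rw [h] at this
  omega

theorem msubst_substOn_congr {B : Finset ℕ} {f g : ℕ → RTerm} (q : RTerm)
    (h : ∀ b ∈ q.occurringVars B, f b = g b) : q.msubst (substOn B f) = q.msubst (substOn B g) :=
  msubst_congr q fun y hy => by
    by_cases hyB : y ∈ B
    · simp [substOn, hyB, h y ⟨hyB, hy⟩]
    · simp [substOn, hyB]

def PermRenaming (A : Finset ℕ) (p : RTerm) (B : Finset ℕ) (q : RTerm) : Prop :=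
  ∃ π : ℕ → ℕ, Set.BijOn π (q.occurringVars B) (p.occurringVars A) ∧
    ∀ us : ℕ → RTerm, q.msubst (substOn B (us ∘ π)) = p.msubst (substOn A us)

theorem permRenaming_self_of_deg_eq_zero {A B : Finset ℕ} {p : RTerm}
    (hA : ∀ a ∈ A, p.deg a = 0) (hB : ∀ b ∈ B, p.deg b = 0) : PermRenaming A p B p := by
  have hempty : ∀ C : Finset ℕ, (∀ c ∈ C, p.deg c = 0) → p.occurringVars C = ∅ :=
    fun C hC => Set.eq_empty_of_forall_notMem fun c hc => hc.2 (hC c hc.1)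
  refine ⟨id, ?_, fun us => ?_⟩
  · rw [hempty A hA, hempty B hB]
    exact Set.bijOn_empty id
  · rw [msubst_substOn_eq_self _ hA, msubst_substOn_eq_self _ hB]

theorem PermRenaming.lam {A B : Finset ℕ} {t t' : RTerm} {y : ℕ}
    (h : PermRenaming (A.erase y) t (B.erase y) t') : PermRenaming A (lam y t) B (lam y t') := by
  obtain ⟨π, hπ, hsubst⟩ := h
  refine ⟨π, ?_, fun us => ?_⟩
  · rwa [occurringVars_lam, occurringVars_lam]
  · simp [hsubst]

theorem PermRenaming.app_nil {A B : Finset ℕ} {t t' : RTerm} (h : PermRenaming A t B t') :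
    PermRenaming A (app t []) B (app t' []) := by
  obtain ⟨π, hπ, hsubst⟩ := h
  refine ⟨π, ?_, fun us => ?_⟩
  · simpa [occurringVars] using hπ
  · simp [hsubst]

theorem PermRenaming.app_cons {A B : Finset ℕ} {t t' u u' : RTerm} {T T' : List RTerm}
    (h₁ : PermRenaming A (app t T) B (app t' T')) (h₂ : PermRenaming A u B u')
    (hA : ∀ a ∈ A, (app t (u :: T)).deg a ≤ 1) (hB : ∀ b ∈ B, (app t' (u' :: T')).deg b ≤ 1) :
    PermRenaming A (app t (u :: T)) B (app t' (u' :: T')) := by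
  classical
  obtain ⟨π₁, hπ₁, hsubst₁⟩ := h₁
  obtain ⟨π₂, hπ₂, hsubst₂⟩ := h₂
  have hdisj := disjoint_occurringVars (deg_app_cons t' u' T') hB
  set π := ((app t' T').occurringVars B).piecewise π₁ π₂
  refine ⟨π, ?_, fun us => ?_⟩
  · rw [occurringVars_eq_union (deg_app_cons t u T),
      occurringVars_eq_union (deg_app_cons t' u' T')]
    exact hπ₁.piecewise_union hπ₂ hdisj (disjoint_occurringVars (deg_app_cons t u T) hA)
  · have e₁ : (app t' T').msubst (substOn B (us ∘ π)) = (app t T).msubst (substOn A us) :=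
      (msubst_substOn_congr _ fun b hb =>
        congrArg us (Set.piecewise_eq_of_mem _ π₁ π₂ hb)).trans (hsubst₁ us)
    have e₂ : u'.msubst (substOn B (us ∘ π)) = u.msubst (substOn A us) :=
      (msubst_substOn_congr _ fun b hb => congrArg us
        (Set.piecewise_eq_of_notMem _ π₁ π₂ (hdisj.notMem_of_mem_right hb))).trans (hsubst₂ us)
    rw [msubst_app, msubst_app, app.injEq] at e₁
    rw [msubst_app, msubst_app, List.map_cons, List.map_cons, e₁.1, e₁.2, e₂]

/-- `deg_collapse` says that no occurrence of `A` is captured by a binder `λx` when collapsed. -/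
structure IsLinearRenaming (A : Finset ℕ) (x : ℕ) (p : RTerm) : Prop where
  deg_le_one : ∀ a ∈ A, p.deg a ≤ 1
  deg_eq_zero : p.deg x = 0
  deg_collapse : (p.msubst (collapse A x)).deg x = ∑ a ∈ A, p.deg a

namespace IsLinearRenaming

variable {A B : Finset ℕ} {x : ℕ}

theorem lam {y : ℕ} {t : RTerm} (h : IsLinearRenaming A x (lam y t)) (hyx : y ≠ x) :
    IsLinearRenaming (A.erase y) x t where
  deg_le_one a ha := by
    simpa [Ne.symm (Finset.ne_of_mem_erase ha)] using h.deg_le_one a (Finset.mem_of_mem_erase ha)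
  deg_eq_zero := by simpa [hyx] using h.deg_eq_zero
  deg_collapse := by
    have := h.deg_collapse
    rwa [collapse, msubst_lam_substOn, deg_lam, if_neg hyx, sum_deg_lam] at this

theorem of_deg_add {p p₁ p₂ : RTerm} (h : IsLinearRenaming A x p)
    (hdeg : ∀ a, p.deg a = p₁.deg a + p₂.deg a)
    (hcol : (p.msubst (collapse A x)).deg x =
      (p₁.msubst (collapse A x)).deg x + (p₂.msubst (collapse A x)).deg x) :
    IsLinearRenaming A x p₁ ∧ IsLinearRenaming A x p₂ := by
  -- each part's collapse degree is at most its share of the tight total, so both are tight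
  have hp₁ := deg_msubst_collapse_le x A p₁
  have hp₂ := deg_msubst_collapse_le x A p₂
  have hx := h.deg_eq_zero
  have hsum := h.deg_collapse
  simp only [hdeg, Finset.sum_add_distrib] at hx hsum
  refine ⟨⟨fun a ha => ?_, by omega, by omega⟩, ⟨fun a ha => ?_, by omega, by omega⟩⟩ <;>
    · have := h.deg_le_one a ha
      rw [hdeg] at this
      omega

theorem of_app_nil {t : RTerm} (h : IsLinearRenaming A x (app t [])) : IsLinearRenaming A x t :=
  (h.of_deg_add (p₂ := c0) (by simp) (by simp)).1

theorem of_app_cons {t u : RTerm} {T : List RTerm} (h : IsLinearRenaming A x (app t (u :: T))) :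
    IsLinearRenaming A x (app t T) ∧ IsLinearRenaming A x u :=
  h.of_deg_add (fun _ => deg_app_cons ..)
    (by rw [msubst_app, List.map_cons, deg_app_cons, msubst_app])

theorem permRenaming_of_deg_collapse_eq_zero {p q : RTerm} (hp : IsLinearRenaming A x p)
    (hq : IsLinearRenaming B x q) (h : p.msubst (collapse A x) = q.msubst (collapse B x))
    (h0 : (p.msubst (collapse A x)).deg x = 0) : PermRenaming A p B q := by
  have hA : ∀ a ∈ A, p.deg a = 0 := Finset.sum_eq_zero_iff.1 (hp.deg_collapse ▸ h0)
  have hB : ∀ b ∈ B, q.deg b = 0 := Finset.sum_eq_zero_iff.1 (hq.deg_collapse ▸ h ▸ h0)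
  rw [collapse, collapse, msubst_substOn_eq_self _ hA, msubst_substOn_eq_self _ hB] at h
  subst h
  exact permRenaming_self_of_deg_eq_zero hA hB

end IsLinearRenaming

def UniqueUpToPerm (p : RTerm) : Prop :=
  ∀ ⦃q : RTerm⦄ ⦃A B : Finset ℕ⦄ ⦃x : ℕ⦄, IsLinearRenaming A x p → IsLinearRenaming B x q →
    p.msubst (collapse A x) = q.msubst (collapse B x) → PermRenaming A p B q

theorem uniqueUpToPerm_var (y : ℕ) : UniqueUpToPerm (var y) := by
  intro q A B x hp hq h
  by_cases hyA : y ∈ A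
  · cases q with
    | var z =>
      simp only [collapse, msubst_var_substOn, hyA, if_true] at h
      have hzB : z ∈ B := by
        by_contra hzB
        rw [if_neg hzB, var.injEq] at h
        subst h
        simpa using hq.deg_eq_zero
      refine ⟨fun _ => y, ?_, fun us => by simp [hyA, hzB]⟩
      rw [occurringVars_var hyA, occurringVars_var hzB]
      exact Set.bijOn_singleton.2 rfl
    | _ => simp [collapse, hyA] at h
  · refine hp.permRenaming_of_deg_collapse_eq_zero hq h ?_
    simpa [collapse, hyA] using hp.deg_eq_zero

theorem uniqueUpToPerm_c0 : UniqueUpToPerm c0 :=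
  fun _ _ _ _ hp hq h => hp.permRenaming_of_deg_collapse_eq_zero hq h (by simp)

theorem UniqueUpToPerm.lam {t : RTerm} (ht : UniqueUpToPerm t) (y : ℕ) :
    UniqueUpToPerm (lam y t) := by
  intro q A B x hp hq h
  by_cases hyx : y = x
  · exact hp.permRenaming_of_deg_collapse_eq_zero hq h (by simp [collapse, hyx])
  cases q with
  | lam z t' =>
    simp only [collapse, msubst_lam_substOn, lam.injEq] at h
    obtain ⟨rfl, h⟩ := h
    exact (ht (hp.lam hyx) (hq.lam hyx) h).lam
  | var z => simp only [collapse, msubst_lam_substOn, msubst_var_substOn] at h; split_ifs at h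
  | _ => simp [collapse] at h

theorem UniqueUpToPerm.app_nil {t : RTerm} (ht : UniqueUpToPerm t) :
    UniqueUpToPerm (app t []) := by
  intro q A B x hp hq h
  cases q with
  | app t' T' =>
    cases T' with
    | nil =>
      simp only [msubst_app, List.map_nil, app.injEq, and_true] at h
      exact (ht hp.of_app_nil hq.of_app_nil h).app_nil
    | cons => simp at h
  | var z => simp only [collapse, msubst_app, msubst_var_substOn] at h; split_ifs at h
  | _ => simp [collapse] at h

theorem UniqueUpToPerm.app_cons {t u : RTerm} {T : List RTerm} (htT : UniqueUpToPerm (app t T))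
    (hu : UniqueUpToPerm u) : UniqueUpToPerm (app t (u :: T)) := by
  intro q A B x hp hq h
  cases q with
  | app t' T'' =>
    cases T'' with
    | nil => simp at h
    | cons u' T' =>
      simp only [msubst_app, List.map_cons, app.injEq, List.cons.injEq] at h
      obtain ⟨htt', huu', hTT'⟩ := h
      obtain ⟨hp₁, hp₂⟩ := hp.of_app_cons
      obtain ⟨hq₁, hq₂⟩ := hq.of_app_cons
      exact (htT hp₁ hq₁ (by simp [htt', hTT'])).app_cons (hu hp₂ hq₂ huu')
        hp.deg_le_one hq.deg_le_one
  | var z => simp only [collapse, msubst_app, msubst_var_substOn] at h; split_ifs at h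
  | _ => simp [collapse] at h

theorem uniqueUpToPerm : ∀ p : RTerm, UniqueUpToPerm p :=
  RTerm.rec (motive_2 := fun T => ∀ t, UniqueUpToPerm t → UniqueUpToPerm (app t T))
    uniqueUpToPerm_var (fun y _ ih => ih.lam y) (fun t _ iht ihT => ihT t iht) uniqueUpToPerm_c0
    (fun _ ht => ht.app_nil) (fun _ _ ihu ihT t ht => (ihT t ht).app_cons ihu)

variable {n : ℕ} {xs : Fin n → ℕ}

theorem msubstFin_eq_msubst_substOn (xs : Fin n → ℕ) (vs : Fin n → RTerm) (t : RTerm) :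
    msubstFin xs vs t = t.msubst (substOn (Finset.univ.image xs) (Function.extend xs vs var)) := by
  unfold msubstFin
  congr 1
  funext y
  by_cases h : ∃ i, xs i = y
  · simp [substOn, h, Function.extend_def]
  · simp [substOn, h]

theorem occurringVars_image {p : RTerm} (h : ∀ i, p.deg (xs i) = 1) :
    p.occurringVars (Finset.univ.image xs) = Set.range xs := by
  ext y
  simp only [occurringVars, Finset.mem_image, Finset.mem_univ, true_and, ne_eq,
    Set.mem_ofPred_eq, Set.mem_range, and_iff_left_iff_imp, forall_exists_index]
  rintro i rfl
  simp [h]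

theorem isLinearRenaming_image (hinj : Function.Injective xs) {x : ℕ} {p : RTerm}
    (h : ∀ i, p.deg (xs i) = 1) (hx : p.deg x = 0)
    (hcol : (p.msubst (collapse (Finset.univ.image xs) x)).deg x = n) :
    IsLinearRenaming (Finset.univ.image xs) x p where
  deg_le_one := by simp [h]
  deg_eq_zero := hx
  deg_collapse := by rw [hcol, Finset.sum_image fun i _ j _ h => hinj h]; simp [h]

theorem msubstFin_comp_perm (hinj : Function.Injective xs) {σ : Equiv.Perm (Fin n)} {π : ℕ → ℕ}
    (hσ : ∀ i, xs (σ i) = π (xs i)) {p q : RTerm}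
    (h : ∀ us, q.msubst (substOn (Finset.univ.image xs) (us ∘ π)) =
      p.msubst (substOn (Finset.univ.image xs) us))
    (vs : Fin n → RTerm) : msubstFin xs (vs ∘ σ) q = msubstFin xs vs p := by
  rw [msubstFin_eq_msubst_substOn, msubstFin_eq_msubst_substOn, ← h]
  congr 1
  refine substOn_congr ?_
  simp only [Finset.mem_image, Finset.mem_univ, true_and, forall_exists_index,
    forall_apply_eq_imp_iff, Function.comp_apply, ← hσ, hinj.extend_apply, implies_true]

end RTerm

theorem linear_subst_well_defined_general (s : RTerm) (x : ℕ) (n : ℕ)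
    (hdeg : s.deg x = n) (xs : Fin n → ℕ)
    (hinj : Function.Injective xs)
    (sh sh' : RTerm)
    (hone : ∀ i, sh.deg (xs i) = 1) (hone' : ∀ i, sh'.deg (xs i) = 1)
    (hno : sh.deg x = 0) (hno' : sh'.deg x = 0)
    (hcol : sh.msubst (fun y => if ∃ i, xs i = y then some (.var x) else none) = s)
    (hcol' : sh'.msubst (fun y => if ∃ i, xs i = y then some (.var x) else none) = s)
    (ts : Fin n → RTerm) :
    (∑ f : Equiv.Perm (Fin n),
        Finsupp.single (msubstFin xs (fun i => ts (f i)) sh) (1 : ℕ)) =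
      ∑ f : Equiv.Perm (Fin n),
        Finsupp.single (msubstFin xs (fun i => ts (f i)) sh') (1 : ℕ) := by
  have hA : (fun y => if ∃ i, xs i = y then some (.var x) else none) =
      RTerm.collapse (Finset.univ.image xs) x := by
    funext y
    simp [RTerm.collapse, RTerm.substOn]
  rw [hA] at hcol hcol'
  obtain ⟨π, hπ, hsubst⟩ := RTerm.uniqueUpToPerm sh
    (RTerm.isLinearRenaming_image hinj hone hno (by rw [hcol, hdeg]))
    (RTerm.isLinearRenaming_image hinj hone' hno' (by rw [hcol', hdeg])) (hcol.trans hcol'.symm)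
  rw [RTerm.occurringVars_image hone, RTerm.occurringVars_image hone'] at hπ
  obtain ⟨σ, hσ⟩ := hinj.exists_perm_of_bijOn_range hπ
  calc _ = ∑ f : Equiv.Perm (Fin n),
          Finsupp.single (msubstFin xs (fun i => ts ((f * σ) i)) sh') 1 :=
        Finset.sum_congr rfl fun f _ => congrArg (Finsupp.single · 1)
          (RTerm.msubstFin_comp_perm hinj hσ hsubst fun i => ts (f i)).symm
    _ = _ := Equiv.sum_comp (Equiv.mulRight σ)
          fun f => Finsupp.single (msubstFin xs (fun i => ts (f i)) sh') 1

/-- **The linear substitution `∂_x(s,T)` is well defined**: its value does not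
depend on the chosen enumeration of the occurrences of `x` in `s`.  If
`deg_x(s) = n` and `sh`, `sh'` are two renamings of `s` obtained by assigning the
fresh pairwise distinct variables `x₁,…,xₙ` to the `n` occurrences of `x` in
two different orders, then for every family `t₁,…,tₙ` of simple terms the sums
`Σ_{f ∈ Sym(n)} sh[t_{f(1)}/x₁,…,t_{f(n)}/xₙ]` and
`Σ_{f ∈ Sym(n)} sh'[t_{f(1)}/x₁,…,t_{f(n)}/xₙ]` coincide (as formal
ℕ-linear combinations of simple terms). -/
theorem linear_subst_well_defined (s : RTerm) (x : ℕ) (n : ℕ)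
    (hdeg : s.deg x = n) (xs : Fin n → ℕ)
    (hinj : Function.Injective xs) (hxs : ∀ i, xs i ≠ x)
    (hfresh : ∀ i, s.deg (xs i) = 0)
    (sh sh' : RTerm)
    (hone : ∀ i, sh.deg (xs i) = 1) (hone' : ∀ i, sh'.deg (xs i) = 1)
    (hno : sh.deg x = 0) (hno' : sh'.deg x = 0)
    (hcol : sh.msubst (fun y => if ∃ i, xs i = y then some (.var x) else none) = s)
    (hcol' : sh'.msubst (fun y => if ∃ i, xs i = y then some (.var x) else none) = s)
    (ts : Fin n → RTerm) :
    (∑ f : Equiv.Perm (Fin n),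
        Finsupp.single (msubstFin xs (fun i => ts (f i)) sh) (1 : ℕ)) =
      ∑ f : Equiv.Perm (Fin n),
        Finsupp.single (msubstFin xs (fun i => ts (f i)) sh') (1 : ℕ) :=
  linear_subst_well_defined_general s x n hdeg xs hinj sh sh' hone hone' hno hno' hcol hcol' ts
end

section
/- The inductive Taylor expansion is compatible with the analytic expansion of application: over a commutative semiring S in which every positive integer has a multiplicative inverse, the Taylor expansion M* = Σ_{t∈Δ} (w(t,M)/m(t))·t satisfies, for all algebraic terms P and Q, ((P)Q)* = Σ_{n=0}^{∞} (1/n!) ⟨P*⟩ (Q*)ⁿ; equivalently, for every simple term t and simple poly-term T of cardinality n, the coefficient of ⟨t⟩T in ((P)Q)* equals the coefficient of ⟨t⟩T in (1/n!)⟨P*⟩(Q*)ⁿ, where ⟨P*⟩(Q*)ⁿ is expanded by multilinearity. -/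
set_option maxHeartbeats 1000000

noncomputable section
open scoped Classical

/-- The multiplicity `m(t)` of a simple resource term:
`m(x) = 1`, `m(λx.t) = m(t)`,
`m(⟨t⟩T) = m(t) · ∏_{u ∈ supp T} T(u)! · m(u)^{T(u)}`. -/
def mult : RTerm → ℕ
  | .var _ => 1
  | .lam _ t => mult t
  | .app t T =>
      mult t * (T.attach.map fun u => mult u.1).prod *
        ∏ u ∈ (↑T : Multiset RTerm).toFinset, ((↑T : Multiset RTerm).count u).factorial
  | .c0 => 1
decreasing_by all_goals (try simp_wf) <;> first
  | (have := List.sizeOf_lt_of_mem u.2; omega)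
  | omega

/-- The multiplicity `m(T) = ∏_{u ∈ supp T} T(u)! · m(u)^{T(u)}`
of a simple poly-term `T`. -/
def multPoly (T : List RTerm) : ℕ :=
  (T.map mult).prod *
    ∏ u ∈ (↑T : Multiset RTerm).toFinset, ((↑T : Multiset RTerm).count u).factorial

end
noncomputable section
open scoped Classical

/-- Terms of the algebraic λ-calculus over a semiring `S`
(`M ::= x | λx.M | (M)N | αM | M+N | 0`), enriched with the constant `c₀`. -/
inductive ATerm (S : Type*) : Type _
  | var  : ℕ → ATerm S
  | lam  : ℕ → ATerm S → ATerm S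
  | app  : ATerm S → ATerm S → ATerm S
  | smul : S → ATerm S → ATerm S
  | add  : ATerm S → ATerm S → ATerm S
  | zero : ATerm S
  | c0   : ATerm S

variable {S : Type*}

/-- Free variables of an algebraic term. -/
def ATerm.fv : ATerm S → Set ℕ
  | .var x => {x}
  | .lam x M => M.fv \ {x}
  | .app M N => M.fv ∪ N.fv
  | .smul _ M => M.fv
  | .add M N => M.fv ∪ N.fv
  | .zero => ∅
  | .c0 => ∅

/-- The weight `w(t,M)` of a simple resource term `t` in an algebraic term `M`:
`w(x,x) = 1`, `w(λx.t, λx.M) = w(t,M)`,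
`w(⟨t⟩T, (M)N) = w(t,M) · ∏_{u ∈ supp T} w(u,N)^{T(u)}`,
`w(t, αM) = α·w(t,M)`, `w(t, M+N) = w(t,M) + w(t,N)`, `w(c₀,c₀) = 1`,
and `w(t,M) = 0` in all other cases. -/
def weight [Semiring S] : RTerm → ATerm S → S
  | t, .smul α M => α * weight t M
  | t, .add M N => weight t M + weight t N
  | .var x, .var y => if x = y then 1 else 0
  | .lam x t, .lam y M => if x = y then weight t M else 0
  | .app t T, .app M N => weight t M * (T.attach.map fun u => weight u.1 N).prod
  | .c0, .c0 => 1
  | _, _ => 0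
termination_by t M => sizeOf M
decreasing_by all_goals (try simp_wf) <;> omega

/-- The coefficient `M*_t = w(t,M) / m(t)` of the simple term `t` in the
Taylor expansion `M* = Σ_t (w(t,M)/m(t))·t` of the algebraic term `M`
(meaningful when the positive integers are invertible in `S`). -/
def taylorCoeff [Semiring S] (t : RTerm) (M : ATerm S) : S :=
  Ring.inverse ((mult t : S)) * weight t M

/-- The equivalence `≡_alg` of the algebraic λ-calculus: the congruence
generated by the left `S`-module axioms and the linearity axioms. -/
inductive AlgEq [Semiring S] : ATerm S → ATerm S → Prop
  | refl (M) : AlgEq M M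
  | symm {M N} : AlgEq M N → AlgEq N M
  | trans {M N P} : AlgEq M N → AlgEq N P → AlgEq M P
  -- congruence rules
  | lamCong (x) {M N} : AlgEq M N → AlgEq (.lam x M) (.lam x N)
  | appCong {M M' N N'} : AlgEq M M' → AlgEq N N' → AlgEq (.app M N) (.app M' N')
  | smulCong (α) {M N} : AlgEq M N → AlgEq (.smul α M) (.smul α N)
  | addCong {M M' N N'} : AlgEq M M' → AlgEq N N' → AlgEq (.add M N) (.add M' N')
  -- left S-module axioms
  | addZero (M) : AlgEq (.add M .zero) M
  | addAssoc (M N P) : AlgEq (.add (.add M N) P) (.add M (.add N P))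
  | addComm (M N) : AlgEq (.add M N) (.add N M)
  | smulAdd (α M N) : AlgEq (.smul α (.add M N)) (.add (.smul α M) (.smul α N))
  | addSmul (α β M) : AlgEq (.add (.smul α M) (.smul β M)) (.smul (α + β) M)
  | smulSmul (α β M) : AlgEq (.smul α (.smul β M)) (.smul (α * β) M)
  | oneSmul (M) : AlgEq (.smul 1 M) M
  | zeroSmul (M) : AlgEq (.smul (0 : S) M) .zero
  | smulZero (α) : AlgEq (.smul α .zero) .zero
  -- linearity axioms
  | lamAdd (x M N) : AlgEq (.lam x (.add M N)) (.add (.lam x M) (.lam x N))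
  | lamSmul (x α M) : AlgEq (.lam x (.smul α M)) (.smul α (.lam x M))
  | lamZero (x) : AlgEq (.lam x (.zero : ATerm S)) .zero
  | zeroApp (M) : AlgEq (.app .zero M) .zero
  | smulApp (α M N) : AlgEq (.app (.smul α M) N) (.smul α (.app M N))
  | addApp (M N P) : AlgEq (.app (.add M N) P) (.add (.app M P) (.app N P))

/-- Pure λ-terms: algebraic terms built only from variables, abstraction and
application. -/
inductive ATerm.Pure : ATerm S → Prop
  | var (x) : Pure (.var x)
  | lam (x) {M} : Pure M → Pure (.lam x M)
  | app {M N} : Pure M → Pure N → Pure (.app M N)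

end
open scoped Classical Nat

/-!
Since `S` is commutative, every rearrangement `L` of `T` contributes the same summand
`P*_t · ∏_{u ∈ T} Q*_u` on the right. A list of length `n` has `n! / ∏_u T(u)!` distinct
rearrangements, and this count cancels exactly the factor `∏_u T(u)!` by which the multiplicity
`m(⟨t⟩T)` exceeds `m(t) · ∏_{u ∈ T} m(u)`.
-/

namespace List

variable {α : Type*} [DecidableEq α]

theorem prod_factorial_count_eq_count_mul_erase {T : List α} {b : α} (hb : b ∈ T) :
    ∏ u ∈ T.toFinset, (T.count u)! =
      T.count b * ∏ u ∈ (T.erase b).toFinset, ((T.erase b).count u)! := by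
  -- `T.erase b` may lose `b` from its support, but only when its count drops to `0! = 1`
  have hsupp : ∏ u ∈ (T.erase b).toFinset, ((T.erase b).count u)! =
      ∏ u ∈ T.toFinset, ((T.erase b).count u)! := by
    refine Finset.prod_subset (fun u hu => mem_toFinset.2 (mem_of_mem_erase (mem_toFinset.1 hu)))
      fun u _ hu => ?_
    rw [count_eq_zero_of_not_mem (fun h => hu (mem_toFinset.2 h)), Nat.factorial_zero]
  have hb' : b ∈ T.toFinset := mem_toFinset.2 hb
  obtain ⟨k, hk⟩ := Nat.exists_eq_add_one_of_ne_zero (count_pos_iff.2 hb).ne'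
  have hrest : ∏ u ∈ T.toFinset.erase b, ((T.erase b).count u)! =
      ∏ u ∈ T.toFinset.erase b, (T.count u)! :=
    Finset.prod_congr rfl fun u hu => by rw [count_erase_of_ne (Finset.ne_of_mem_erase hu)]
  rw [hsupp, ← Finset.mul_prod_erase _ _ hb', ← Finset.mul_prod_erase _ _ hb', hrest,
    count_erase_self, hk, Nat.add_sub_cancel, Nat.factorial_succ, mul_assoc]

theorem card_permutations_toFinset_eq_sum_erase {T : List α} (hT : T ≠ []) :
    T.permutations.toFinset.card =
      ∑ b ∈ T.toFinset, (T.erase b).permutations.toFinset.card := by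
  have hcover : T.permutations.toFinset =
      T.toFinset.biUnion fun b => (T.erase b).permutations.toFinset.image (b :: ·) := by
    ext L
    simp only [mem_toFinset, mem_permutations, Finset.mem_biUnion, Finset.mem_image]
    constructor
    · rcases L with _ | ⟨b, L'⟩
      · exact fun hL => absurd hL.symm.eq_nil hT
      intro hL
      exact ⟨b, (cons_perm_iff_perm_erase.1 hL).1, L', (cons_perm_iff_perm_erase.1 hL).2, rfl⟩
    · rintro ⟨b, hb, L', hL', rfl⟩
      exact cons_perm_iff_perm_erase.2 ⟨hb, hL'⟩
  have hdisj : (T.toFinset : Set α).PairwiseDisjoint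
      fun b => (T.erase b).permutations.toFinset.image (b :: ·) := by
    intro b _ c _ hbc
    simp only [Function.onFun, Finset.disjoint_left, Finset.mem_image]
    rintro _ ⟨L, _, rfl⟩ ⟨L', _, h⟩
    exact hbc (cons_eq_cons.1 h).1.symm
  rw [hcover, Finset.card_biUnion hdisj]
  exact Finset.sum_congr rfl fun b _ => Finset.card_image_of_injective _ cons_injective

theorem card_permutations_toFinset_mul_prod_factorial_count (T : List α) :
    T.permutations.toFinset.card * ∏ u ∈ T.toFinset, (T.count u)! = T.length ! := by
  induction hn : T.length generalizing T with
  | zero => simp [length_eq_zero_iff.1 hn, permutations]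
  | succ n ih =>
    have hT : T ≠ [] := ne_nil_of_length_pos (by omega)
    have hterm (b : α) (hb : b ∈ T.toFinset) :
        (T.erase b).permutations.toFinset.card * ∏ u ∈ T.toFinset, (T.count u)! =
          T.count b * n ! := by
      have hbT := mem_toFinset.1 hb
      rw [prod_factorial_count_eq_count_mul_erase hbT, mul_left_comm,
        ih _ (by rw [length_erase_of_mem hbT, hn, Nat.add_sub_cancel])]
    rw [card_permutations_toFinset_eq_sum_erase hT, Finset.sum_mul, Finset.sum_congr rfl hterm,
      ← Finset.sum_mul, sum_toFinset_count_eq_length, hn, Nat.factorial_succ]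

end List

theorem Ring.inverse_eq_inverse_mul_of_mul_eq {M₀ : Type*} [CommMonoidWithZero M₀] {a b c : M₀}
    (hc : IsUnit c) (h : a * b = c) : Ring.inverse b = Ring.inverse c * a := by
  have ha : IsUnit a := isUnit_of_mul_isUnit_left (h ▸ hc)
  rw [← h, Ring.mul_inverse_rev, mul_assoc, Ring.inverse_mul_cancel a ha, mul_one]

theorem weight_app_app {S : Type*} [Semiring S] (t : RTerm) (T : List RTerm) (P Q : ATerm S) :
    weight (.app t T) (.app P Q) = weight t P * (T.map fun u => weight u Q).prod := by
  rw [weight]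
  simp only [List.map_subtype, List.unattach_attach]

theorem mult_app (t : RTerm) (T : List RTerm) :
    mult (.app t T) = mult t * (T.map mult).prod * ∏ u ∈ T.toFinset, (T.count u)! := by
  rw [mult]
  simp only [List.map_subtype, List.unattach_attach, Multiset.coe_count, List.toFinset_coe]

theorem taylorCoeff_app_app {S : Type*} [CommSemiring S]
    (t : RTerm) (T : List RTerm) (P Q : ATerm S) :
    taylorCoeff (.app t T) (.app P Q) =
      Ring.inverse ((∏ u ∈ T.toFinset, (T.count u)! : ℕ) : S) *
        (taylorCoeff t P * (T.map fun u => taylorCoeff u Q).prod) := by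
  have hinv_prod : Ring.inverse ((T.map mult).prod : S) =
      (T.map fun u => Ring.inverse (mult u : S)).prod := by
    rw [Nat.cast_list_prod, ← MonoidWithZero.inverse_apply, map_list_prod, List.map_map,
      List.map_map]
    rfl
  simp only [taylorCoeff, weight_app_app, mult_app, Nat.cast_mul, Ring.mul_inverse_rev,
    hinv_prod]
  rw [List.prod_map_mul]
  ring

/-- **The inductive Taylor expansion is compatible with the analytic expansion
of application**: over a commutative semiring in which every positive integer
is invertible, for every simple term `t` and every simple poly-term `T` of
cardinality `n`, the coefficient of `⟨t⟩T` in `((P)Q)*` equals the coefficient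
of `⟨t⟩T` in `(1/n!)·⟨P*⟩(Q*)ⁿ`, the latter being expanded by multilinearity
(i.e. it is `1/n!` times the sum, over all sequences `(u₁,…,uₙ)` enumerating
the multiset `T`, of `P*_t · Q*_{u₁} ⋯ Q*_{uₙ}`). -/
theorem taylor_app {S : Type*} [CommSemiring S]
    (hinv : ∀ n : ℕ, 0 < n → IsUnit ((n : S)))
    (P Q : ATerm S) (t : RTerm) (T : List RTerm) :
    taylorCoeff (.app t T) (.app P Q) =
      Ring.inverse ((T.length.factorial : S)) *
        ((T.permutations.dedup).map fun L =>
            taylorCoeff t P * (L.map fun u => taylorCoeff u Q).prod).sum := by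
  have hconst : ∀ L ∈ T.permutations.dedup,
      taylorCoeff t P * (L.map fun u => taylorCoeff u Q).prod =
        taylorCoeff t P * (T.map fun u => taylorCoeff u Q).prod := fun L hL => by
    rw [((List.mem_permutations.1 (List.mem_dedup.1 hL)).map _).prod_eq]
  have hcount : ((T.permutations.dedup.length * ∏ u ∈ T.toFinset, (T.count u)! : ℕ) : S) =
      T.length ! := by
    rw [← List.card_toFinset, List.card_permutations_toFinset_mul_prod_factorial_count]
  rw [List.map_congr_left hconst, List.map_const', List.sum_replicate, nsmul_eq_mul,
    taylorCoeff_app_app,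
    Ring.inverse_eq_inverse_mul_of_mul_eq (hinv _ (Nat.factorial_pos _))
      (by rw [← Nat.cast_mul, hcount]), mul_assoc]
end

section
/- The weight, and hence the Taylor expansion, is invariant under the algebraic equivalence: if M ≡_alg N in the algebraic λ-calculus over a semiring S, then w(t,M) = w(t,N) for every simple resource term t; consequently, if S has multiplicative inverses of positive integers, M* = N*. -/
set_option maxHeartbeats 1000000

section
variable {S : Type*} [Semiring S]

@[simp] lemma weight_smul (t : RTerm) (α : S) (M : ATerm S) :
    weight t (.smul α M) = α * weight t M := by
  cases t <;> simp [weight]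

@[simp] lemma weight_add (t : RTerm) (M N : ATerm S) :
    weight t (.add M N) = weight t M + weight t N := by
  cases t <;> simp [weight]

@[simp] lemma weight_zero (t : RTerm) : weight t (.zero : ATerm S) = 0 := by
  cases t <;> simp [weight]

lemma weight_lam_congr (x : ℕ) {M N : ATerm S} (h : ∀ t, weight t M = weight t N) (t : RTerm) :
    weight t (.lam x M) = weight t (.lam x N) := by
  cases t <;> simp [weight, h]

lemma weight_app_congr {M M' N N' : ATerm S} (hM : ∀ t, weight t M = weight t M')
    (hN : ∀ t, weight t N = weight t N') (t : RTerm) :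
    weight t (.app M N) = weight t (.app M' N') := by
  cases t <;> simp [weight, hM, hN]

@[simp] lemma weight_lam_add (t : RTerm) (x : ℕ) (M N : ATerm S) :
    weight t (.lam x (.add M N)) = weight t (.lam x M) + weight t (.lam x N) := by
  cases t <;> simp [weight, ite_add_zero]

@[simp] lemma weight_lam_smul (t : RTerm) (x : ℕ) (α : S) (M : ATerm S) :
    weight t (.lam x (.smul α M)) = α * weight t (.lam x M) := by
  cases t <;> simp [weight]

@[simp] lemma weight_lam_zero (t : RTerm) (x : ℕ) : weight t (.lam x (.zero : ATerm S)) = 0 := by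
  cases t <;> simp [weight]

@[simp] lemma weight_app_zero (t : RTerm) (N : ATerm S) : weight t (.app .zero N) = 0 := by
  cases t <;> simp [weight]

@[simp] lemma weight_app_smul (t : RTerm) (α : S) (M N : ATerm S) :
    weight t (.app (.smul α M) N) = α * weight t (.app M N) := by
  cases t <;> simp [weight, mul_assoc]

@[simp] lemma weight_app_add (t : RTerm) (M N P : ATerm S) :
    weight t (.app (.add M N) P) = weight t (.app M P) + weight t (.app N P) := by
  cases t <;> simp [weight, add_mul]

lemma AlgEq.weight_eq {M N : ATerm S} (h : AlgEq M N) (t : RTerm) :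
    weight t M = weight t N := by
  induction h generalizing t with
  | refl => rfl
  | symm _ ih => exact (ih t).symm
  | trans _ _ ih₁ ih₂ => exact (ih₁ t).trans (ih₂ t)
  | lamCong x _ ih => exact weight_lam_congr x ih t
  | appCong _ _ ihM ihN => exact weight_app_congr ihM ihN t
  | smulCong _ _ ih => simp [ih]
  | addCong _ _ ihM ihN => simp [ihM, ihN]
  | addAssoc => simp [add_assoc]
  | addComm => simp [add_comm]
  | smulAdd => simp [mul_add]
  | addSmul => simp [add_mul]
  | smulSmul => simp [mul_assoc]
  -- the remaining axioms are, through `weight t`, instances of the simp lemmas above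
  | _ => simp

end

/-- **Invariance of the weight and of the Taylor expansion under the algebraic
equivalence**: if `M ≡_alg N` then `w(t,M) = w(t,N)` for every simple resource
term `t`; consequently, if positive integers are invertible in `S`, the Taylor
expansions coincide: `M*_t = N*_t` for all `t`. -/
theorem weight_algEq {S : Type*} [Semiring S] {M N : ATerm S} (h : AlgEq M N) :
    (∀ t : RTerm, weight t M = weight t N) ∧
      ((∀ n : ℕ, 0 < n → IsUnit ((n : S))) →
        ∀ t : RTerm, taylorCoeff t M = taylorCoeff t N) := by
  refine ⟨h.weight_eq, fun _ t => ?_⟩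
  rw [taylorCoeff, taylorCoeff, h.weight_eq t]
end
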